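/- arXiv:2204.04099 — 4 statements merged into one kernel-verified Lean document; each statement's English description precedes it below -/
import Mathlib

section
/- Let C ∈ ℝ^{n×n} and suppose there exist indices i_1,…,i_r (1 ≤ r ≤ n) such that the diagonal entry C_{i_k i_k} is row-column dominant for each k ∈ [r]. Then every greedy matching π of C satisfies π(i_k) = i_k for all k ∈ [r]; in particular overlap(π, id) ≥ r/n. -/
open MeasureTheory ProbabilityTheory Finset
open scoped NNReal ENNReal

noncomputable section

/-- The permutation matrix of `x`: entry `(k,l)` is 1 iff `x k = l`. -/
def permMat {n : ℕ} (x : Equiv.Perm (Fin n)) : Matrix (Fin n) (Fin n) ℝ :=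
  fun k l => if x k = l then 1 else 0

/-- Entry `(i,j)` of the triple product `A * X * B`. -/
def matProd3 {n : ℕ} (A X B : Matrix (Fin n) (Fin n) ℝ) : Matrix (Fin n) (Fin n) ℝ :=
  fun i j => ∑ k, ∑ l, A i k * X k l * B l j

/-- The set of fixed points of a permutation of `Fin n`. -/
def fixedPts {n : ℕ} (x : Equiv.Perm (Fin n)) : Finset (Fin n) :=
  Finset.univ.filter fun i => x i = i

/-- `π` is a possible output of the greedy maximum weight matching (GMWM) algorithm
on input `C`: there is an ordering `τ 0, τ 1, …` of the rows such that at each step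
the chosen entry `C (τ k) (π (τ k))` is maximal among all entries whose row and column
have not yet been used. -/
def IsGreedyMatching {n : ℕ} (C : Matrix (Fin n) (Fin n) ℝ) (π : Equiv.Perm (Fin n)) : Prop :=
  ∃ τ : Equiv.Perm (Fin n), ∀ k i j : Fin n,
    (∀ k', k' < k → τ k' ≠ i) → (∀ k', k' < k → π (τ k') ≠ j) →
      C i j ≤ C (τ k) (π (τ k))

/-- A GOE Wigner matrix: symmetric, jointly independent upper-triangular entries,
off-diagonal entries `N(0, 1/n)`, diagonal entries `N(0, 2/n)`. -/
def IsWigner {Ω : Type*} [MeasureSpace Ω] (n : ℕ)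
    (A : Ω → Matrix (Fin n) (Fin n) ℝ) : Prop :=
  (∀ ω i j, A ω i j = A ω j i) ∧
  (∀ i j, Measurable fun ω => A ω i j) ∧
  iIndepFun
    (fun (p : {q : Fin n × Fin n // q.1 ≤ q.2}) ω => A ω p.1.1 p.1.2) volume ∧
  (∀ i j : Fin n, i < j →
    Measure.map (fun ω => A ω i j) volume = gaussianReal 0 ((1 : ℝ≥0) / n)) ∧
  (∀ i : Fin n,
    Measure.map (fun ω => A ω i i) volume = gaussianReal 0 ((2 : ℝ≥0) / n))

/-- A pair of GOE Wigner matrices whose upper-triangular entries are all mutually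
independent (i.e. `A` and `Z` are two independent GOE Wigner matrices). -/
def IsWignerPair {Ω : Type*} [MeasureSpace Ω] (n : ℕ)
    (A Z : Ω → Matrix (Fin n) (Fin n) ℝ) : Prop :=
  (∀ ω i j, A ω i j = A ω j i) ∧ (∀ ω i j, Z ω i j = Z ω j i) ∧
  (∀ i j, Measurable fun ω => A ω i j) ∧ (∀ i j, Measurable fun ω => Z ω i j) ∧
  iIndepFun
    (fun (p : Bool × {q : Fin n × Fin n // q.1 ≤ q.2}) ω =>
      if p.1 then A ω p.2.1.1 p.2.1.2 else Z ω p.2.1.1 p.2.1.2) volume ∧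
  (∀ i j : Fin n, i < j →
    Measure.map (fun ω => A ω i j) volume = gaussianReal 0 ((1 : ℝ≥0) / n) ∧
    Measure.map (fun ω => Z ω i j) volume = gaussianReal 0 ((1 : ℝ≥0) / n)) ∧
  (∀ i : Fin n,
    Measure.map (fun ω => A ω i i) volume = gaussianReal 0 ((2 : ℝ≥0) / n) ∧
    Measure.map (fun ω => Z ω i i) volume = gaussianReal 0 ((2 : ℝ≥0) / n))

/-- The constant `c(σ)` from the paper. -/
def cconst (σ : ℝ) : ℝ := (1 / 384) * (1 - σ ^ 2) / (1 + 2 * σ * Real.sqrt (1 - σ ^ 2))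

/-- Frobenius norm of a real matrix. -/
def frobNorm {n : ℕ} (M : Matrix (Fin n) (Fin n) ℝ) : ℝ :=
  Real.sqrt (∑ i, ∑ j, (M i j) ^ 2)

/-- Set the diagonal of a matrix to zero. -/
def offdiag {n : ℕ} (M : Matrix (Fin n) (Fin n) ℝ) : Matrix (Fin n) (Fin n) ℝ :=
  fun i j => if i = j then 0 else M i j

namespace IsGreedyMatching

variable {n : ℕ} {C : Matrix (Fin n) (Fin n) ℝ} {π : Equiv.Perm (Fin n)}

/-- At the first step that uses row `i` or column `i`, the entry `C i i` is still available,
so the entry chosen there (in row `i` or in column `i`) is at least `C i i`; dominance then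
forces that entry to be `C i i` itself. -/
theorem apply_eq_self_of_dominant (hπ : IsGreedyMatching C π) {i : Fin n}
    (hcol : ∀ i' : Fin n, i' ≠ i → C i' i < C i i)
    (hrow : ∀ j' : Fin n, j' ≠ i → C i j' < C i i) :
    π i = i := by
  obtain ⟨τ, hτ⟩ := hπ
  set m := min (τ.symm i) (τ.symm (π.symm i))
  have hle : C i i ≤ C (τ m) (π (τ m)) := by
    refine hτ m i i (fun k hk hki => ?_) (fun k hk hki => ?_)
    · have : τ.symm i = k := by rw [← hki, Equiv.symm_apply_apply]
      exact absurd (min_le_left _ _) (this ▸ hk).not_ge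
    · have : τ.symm (π.symm i) = k := by
        rw [← hki, Equiv.symm_apply_apply, Equiv.symm_apply_apply]
      exact absurd (min_le_right _ _) (this ▸ hk).not_ge
  obtain hm | hm : m = τ.symm i ∨ m = τ.symm (π.symm i) := min_choice _ _
  · rw [hm, Equiv.apply_symm_apply] at hle
    by_contra hne
    exact (hrow _ hne).not_ge hle
  · have hcol_used : π (τ m) = i := by rw [hm, Equiv.apply_symm_apply, Equiv.apply_symm_apply]
    rw [hcol_used] at hle
    have hrow_used : τ m = i := by
      by_contra hne
      exact (hcol _ hne).not_ge hle
    rwa [hrow_used] at hcol_used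

end IsGreedyMatching

theorem card_le_card_fixedPts {n : ℕ} {ι : Type*} [Fintype ι] {π : Equiv.Perm (Fin n)}
    {idx : ι → Fin n} (hinj : Function.Injective idx) (hfix : ∀ k, π (idx k) = idx k) :
    Fintype.card ι ≤ (fixedPts π).card :=
  Finset.card_le_card_of_injOn idx (fun k _ => by simp [fixedPts, hfix k]) hinj.injOn

theorem stmt1_general {n : ℕ} (C : Matrix (Fin n) (Fin n) ℝ) (r : ℕ)
    (idx : Fin r → Fin n) (hinj : Function.Injective idx)
    (hdom : ∀ k : Fin r,
      (∀ i' : Fin n, i' ≠ idx k → C i' (idx k) < C (idx k) (idx k)) ∧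
      (∀ j' : Fin n, j' ≠ idx k → C (idx k) j' < C (idx k) (idx k)))
    (π : Equiv.Perm (Fin n)) (hπ : IsGreedyMatching C π) :
    (∀ k : Fin r, π (idx k) = idx k) ∧
    (r : ℝ) / n ≤ ((fixedPts π).card : ℝ) / n := by
  have hfix : ∀ k, π (idx k) = idx k := fun k =>
    hπ.apply_eq_self_of_dominant (hdom k).1 (hdom k).2
  have hcard : r ≤ (fixedPts π).card := by
    simpa using card_le_card_fixedPts hinj hfix
  exact ⟨hfix, div_le_div_of_nonneg_right (by exact_mod_cast hcard) n.cast_nonneg⟩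

/-- If `C` has `r` distinct indices whose diagonal entries are row-column
dominant, then every greedy matching `π` of `C` fixes those indices; in particular
`overlap(π, id) ≥ r/n`. -/
theorem stmt1 {n : ℕ} (C : Matrix (Fin n) (Fin n) ℝ) (r : ℕ)
    (hr1 : 1 ≤ r) (hrn : r ≤ n)
    (idx : Fin r → Fin n) (hinj : Function.Injective idx)
    (hdom : ∀ k : Fin r,
      (∀ i' : Fin n, i' ≠ idx k → C i' (idx k) < C (idx k) (idx k)) ∧
      (∀ j' : Fin n, j' ≠ idx k → C (idx k) j' < C (idx k) (idx k)))
    (π : Equiv.Perm (Fin n)) (hπ : IsGreedyMatching C π) :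
    (∀ k : Fin r, π (idx k) = idx k) ∧
    (r : ℝ) / n ≤ ((fixedPts π).card : ℝ) / n :=
  stmt1_general C r idx hinj hdom π hπ

end
end

section
/- Let A be a GOE Wigner matrix (A random symmetric n×n with independent upper-triangular entries, A_{ij} ~ N(0,1/n) for i<j and A_{ii} ~ N(0,2/n)), let X ∈ P_n be a permutation matrix with permutation x, and set C := A X A. Then E[C_{ii}] = s_x + (1/n)·1_{i ∈ S_X} for every i, and E[C_{ij}] = (1/n)·1_{x(j)=i} for every i ≠ j. Consequently, for all i ≠ j, s_x − 1/n ≤ E[C_{ii}] − E[C_{ij}] ≤ s_x + 1/n. -/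
open MeasureTheory ProbabilityTheory Finset
open scoped NNReal ENNReal

noncomputable section

/-!
Writing `C i j = ∑ k, A i k * A (x k) j`, each summand has expectation zero unless the
entries `A i k` and `A (x k) j` are the same (up to symmetry), i.e. `{i, k} = {x k, j}`,
by independence and centering; otherwise it is the variance of `A i k`. On the diagonal
this selects exactly the fixed points `k` of `x`, with variance `1/n`, plus an extra `1/n`
when `k = i`; off the diagonal it selects only `k = j`, and only when `x j = i`.
-/

namespace ProbabilityTheory

variable {Ω : Type*} {mΩ : MeasurableSpace Ω} {P : Measure Ω} {X : Ω → ℝ} {v : ℝ≥0}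

lemma HasLaw.integral_eq_zero_of_gaussianReal (hX : HasLaw X (gaussianReal 0 v) P) :
    ∫ ω, X ω ∂P = 0 := by
  rw [hX.integral_eq, integral_id_gaussianReal]

lemma HasLaw.integral_sq_of_gaussianReal (hX : HasLaw X (gaussianReal 0 v) P) :
    ∫ ω, X ω ^ 2 ∂P = v := by
  have h := hX.integral_comp (f := fun x : ℝ => x ^ 2) (by fun_prop)
  simp only [Function.comp_def] at h
  rw [h, ← variance_of_integral_eq_zero aemeasurable_id' integral_id_gaussianReal,
    variance_fun_id_gaussianReal]

lemma HasLaw.memLp_two_of_gaussianReal (hX : HasLaw X (gaussianReal 0 v) P) : MemLp X 2 P := by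
  have h : MemLp id 2 (P.map X) := hX.map_eq ▸ memLp_id_gaussianReal 2
  exact (memLp_map_measure_iff aestronglyMeasurable_id hX.aemeasurable).1 h

end ProbabilityTheory

def goeVariance (n : ℕ) (i j : Fin n) : ℝ≥0 := if i = j then 2 / n else 1 / n

lemma coe_goeVariance (n : ℕ) (i j : Fin n) :
    (goeVariance n i j : ℝ) = 1 / n + if i = j then (1 : ℝ) / n else 0 := by
  unfold goeVariance
  split_ifs <;> push_cast <;> ring

/-- The index of the entry `{i, j}` in the independent family of `IsWigner`. -/
def sortedPair {n : ℕ} (i j : Fin n) : {q : Fin n × Fin n // q.1 ≤ q.2} :=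
  ⟨(min i j, max i j), min_le_max⟩

lemma sortedPair_eq_sortedPair_iff {n : ℕ} {i j k l : Fin n} :
    sortedPair i j = sortedPair k l ↔ (i = k ∧ j = l) ∨ (i = l ∧ j = k) := by
  simp only [sortedPair, Subtype.mk.injEq, Prod.mk.injEq]
  rcases le_total i j with hij | hij <;> rcases le_total k l with hkl | hkl <;>
    simp only [min_eq_left, min_eq_right, max_eq_left, max_eq_right, hij, hkl] <;>
    constructor <;> rintro (⟨rfl, rfl⟩ | ⟨rfl, rfl⟩) <;> simp_all [le_antisymm_iff]

lemma matProd3_permMat_apply {n : ℕ} (A B : Matrix (Fin n) (Fin n) ℝ) (x : Equiv.Perm (Fin n))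
    (i j : Fin n) : matProd3 A (permMat x) B i j = ∑ k, A i k * B (x k) j := by
  simp [matProd3, permMat, mul_ite, ite_mul]

namespace IsWigner

variable {Ω : Type*} [MeasureSpace Ω] {n : ℕ} {A : Ω → Matrix (Fin n) (Fin n) ℝ}

lemma entry_sortedPair (hA : IsWigner n A) (ω : Ω) (i j : Fin n) :
    A ω (sortedPair i j).1.1 (sortedPair i j).1.2 = A ω i j := by
  rcases le_total i j with h | h
  · simp [sortedPair, h]
  · simp [sortedPair, h, hA.1 ω j i]

lemma hasLaw_entry (hA : IsWigner n A) (i j : Fin n) :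
    HasLaw (fun ω => A ω i j) (gaussianReal 0 (goeVariance n i j)) := by
  obtain ⟨hsym, hmeas, -, hoff, hdiag⟩ := hA
  refine ⟨(hmeas i j).aemeasurable, ?_⟩
  rcases lt_trichotomy i j with h | rfl | h
  · simp [hoff i j h, goeVariance, h.ne]
  · simp [hdiag i, goeVariance]
  · simp_rw [hsym _ i j]
    simp [hoff j i h, goeVariance, h.ne']

lemma indepFun_entry (hA : IsWigner n A) {a b c d : Fin n}
    (h : sortedPair a b ≠ sortedPair c d) :
    IndepFun (fun ω => A ω a b) (fun ω => A ω c d) := by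
  simpa only [hA.entry_sortedPair] using hA.2.2.1.indepFun h

lemma integral_entry_mul_entry (hA : IsWigner n A) (a b c d : Fin n) :
    ∫ ω, A ω a b * A ω c d =
      if (a = c ∧ b = d) ∨ (a = d ∧ b = c) then (goeVariance n a b : ℝ) else 0 := by
  split_ifs with h
  · have hcd : ∀ ω, A ω c d = A ω a b := by
      rcases h with ⟨rfl, rfl⟩ | ⟨rfl, rfl⟩
      exacts [fun _ => rfl, fun ω => hA.1 ω b a]
    simp_rw [hcd, ← sq]
    exact (hA.hasLaw_entry a b).integral_sq_of_gaussianReal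
  · have hindep := hA.indepFun_entry (mt sortedPair_eq_sortedPair_iff.1 h)
    rw [← Pi.mul_def, hindep.integral_mul_eq_mul_integral
      (hA.hasLaw_entry a b).aemeasurable.aestronglyMeasurable
      (hA.hasLaw_entry c d).aemeasurable.aestronglyMeasurable,
      (hA.hasLaw_entry a b).integral_eq_zero_of_gaussianReal, zero_mul]

lemma integral_matProd3_permMat (hA : IsWigner n A) (x : Equiv.Perm (Fin n)) (i j : Fin n) :
    ∫ ω, matProd3 (A ω) (permMat x) (A ω) i j =
      ∑ k, if (i = x k ∧ k = j) ∨ (i = j ∧ k = x k) then (goeVariance n i k : ℝ) else 0 := by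
  simp_rw [matProd3_permMat_apply]
  rw [integral_finsetSum _ fun k _ => ?_]
  · exact Finset.sum_congr rfl fun k _ => hA.integral_entry_mul_entry i k (x k) j
  · exact (hA.hasLaw_entry i k).memLp_two_of_gaussianReal.integrable_mul
      (hA.hasLaw_entry (x k) j).memLp_two_of_gaussianReal

lemma integral_matProd3_permMat_diag (hA : IsWigner n A) (x : Equiv.Perm (Fin n)) (i : Fin n) :
    ∫ ω, matProd3 (A ω) (permMat x) (A ω) i i =
      (fixedPts x).card / n + if x i = i then (1 : ℝ) / n else 0 := by
  have hcond : ∀ k, ((i = x k ∧ k = i) ∨ (i = i ∧ k = x k)) ↔ k ∈ fixedPts x := by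
    simp only [fixedPts, Finset.mem_filter, Finset.mem_univ, true_and]
    grind
  rw [hA.integral_matProd3_permMat, Finset.sum_congr rfl fun k _ => if_congr (hcond k) rfl rfl,
    Finset.sum_ite_mem, Finset.univ_inter]
  simp only [coe_goeVariance, Finset.sum_add_distrib, Finset.sum_const, Finset.sum_ite_eq]
  simp [fixedPts, div_eq_mul_inv]

lemma integral_matProd3_permMat_of_ne (hA : IsWigner n A) (x : Equiv.Perm (Fin n)) {i j : Fin n}
    (hij : i ≠ j) :
    ∫ ω, matProd3 (A ω) (permMat x) (A ω) i j = if x j = i then (1 : ℝ) / n else 0 := by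
  rw [hA.integral_matProd3_permMat, Finset.sum_eq_single j]
  · simp [goeVariance, hij, eq_comm]
  · intro k _ hkj
    simp [hkj, hij]
  · simp

end IsWigner

theorem stmt2_general {Ω : Type*} [MeasureSpace Ω]
    {n : ℕ}
    (A : Ω → Matrix (Fin n) (Fin n) ℝ) (hA : IsWigner n A)
    (x : Equiv.Perm (Fin n))
    (C : Ω → Matrix (Fin n) (Fin n) ℝ)
    (hC : ∀ ω, C ω = matProd3 (A ω) (permMat x) (A ω))
    (sx : ℝ) (hsx : sx = ((fixedPts x).card : ℝ) / n) :
    (∀ i : Fin n,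
      (∫ ω, C ω i i ∂volume) = sx + (if x i = i then (1 : ℝ) / n else 0)) ∧
    (∀ i j : Fin n, i ≠ j →
      (∫ ω, C ω i j ∂volume) = (if x j = i then (1 : ℝ) / n else 0)) ∧
    (∀ i j : Fin n, i ≠ j →
      sx - 1 / n ≤ (∫ ω, C ω i i ∂volume) - (∫ ω, C ω i j ∂volume) ∧
      (∫ ω, C ω i i ∂volume) - (∫ ω, C ω i j ∂volume) ≤ sx + 1 / n) := by
  simp_rw [hC]
  have hdiag := hA.integral_matProd3_permMat_diag x
  have hoff := fun i j (hij : i ≠ j) => hA.integral_matProd3_permMat_of_ne x hij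
  subst hsx
  refine ⟨hdiag, hoff, fun i j hij => ?_⟩
  rw [hdiag i, hoff i j hij]
  have : (0 : ℝ) ≤ 1 / n := by positivity
  constructor <;> split_ifs <;> linarith

/-- For a GOE Wigner matrix `A`, a permutation matrix `X` (of permutation `x`)
and `C := A X A`: `E[C i i] = s_x + (1/n)·1_{i ∈ S_X}` and, for `i ≠ j`,
`E[C i j] = (1/n)·1_{x j = i}`; consequently
`s_x − 1/n ≤ E[C i i] − E[C i j] ≤ s_x + 1/n` for all `i ≠ j`. -/
theorem stmt2 {Ω : Type*} [MeasureSpace Ω] [IsProbabilityMeasure (volume : Measure Ω)]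
    {n : ℕ} (hn : 0 < n)
    (A : Ω → Matrix (Fin n) (Fin n) ℝ) (hA : IsWigner n A)
    (x : Equiv.Perm (Fin n))
    (C : Ω → Matrix (Fin n) (Fin n) ℝ)
    (hC : ∀ ω, C ω = matProd3 (A ω) (permMat x) (A ω))
    (sx : ℝ) (hsx : sx = ((fixedPts x).card : ℝ) / n) :
    (∀ i : Fin n,
      (∫ ω, C ω i i ∂volume) = sx + (if x i = i then (1 : ℝ) / n else 0)) ∧
    (∀ i j : Fin n, i ≠ j →
      (∫ ω, C ω i j ∂volume) = (if x j = i then (1 : ℝ) / n else 0)) ∧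
    (∀ i j : Fin n, i ≠ j →
      sx - 1 / n ≤ (∫ ω, C ω i i ∂volume) - (∫ ω, C ω i j ∂volume) ∧
      (∫ ω, C ω i i ∂volume) - (∫ ω, C ω i j ∂volume) ≤ sx + 1 / n) :=
  stmt2_general A hA x C hC sx hsx

end
end

section
/- Let A be a GOE Wigner matrix with diagonal set to zero (random symmetric n×n, independent entries A_{ij} ~ N(0,1/n) for i<j, A_{ii}=0). For κ ∈ (0,1/2) and any I ⊆ [n], define the random set Ĩ := {i ∈ [n] : ‖A_{i:}‖²_{I^c} < 8κ}, where ‖A_{i:}‖²_W := Σ_{j∈W} A_{ij}². Then there exist constants C', c' > 0 such that for all n with n ≥ (C'/κ)·log n: P(for every I ⊆ [n] with |I| ≥ (1−κ)n, |Ĩ^c| ≤ (1/4)|I^c|) ≥ 1 − e^{−c'κn}. -/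
open MeasureTheory ProbabilityTheory Finset
open scoped NNReal ENNReal

noncomputable section

/-- A GOE Wigner matrix with zero diagonal: symmetric, zero diagonal, jointly independent
strictly-upper-triangular entries with law `N(0, 1/n)`. -/
def IsWignerOffdiag {Ω : Type*} [MeasureSpace Ω] (n : ℕ)
    (A : Ω → Matrix (Fin n) (Fin n) ℝ) : Prop :=
  (∀ ω i j, A ω i j = A ω j i) ∧ (∀ ω i, A ω i i = 0) ∧
  (∀ i j, Measurable fun ω => A ω i j) ∧
  iIndepFun
    (fun (p : {q : Fin n × Fin n // q.1 < q.2}) ω => A ω p.1.1 p.1.2) volume ∧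
  (∀ i j : Fin n, i < j →
    Measure.map (fun ω => A ω i j) volume = gaussianReal 0 ((1 : ℝ≥0) / n))



open Real in
lemma gauss_exp_sq (n : ℕ) (hn : 1 ≤ n) :
    Integrable (fun x => Real.exp ((n / 8 : ℝ) * x ^ 2)) (gaussianReal 0 ((1 : ℝ≥0) / n)) ∧
    ∫ x, Real.exp ((n / 8 : ℝ) * x ^ 2) ∂(gaussianReal 0 ((1 : ℝ≥0) / n)) ≤ Real.exp (1 / 6) := by
  have hn0 : (0 : ℝ) < n := by exact_mod_cast hn
  have hv : ((1 : ℝ≥0) / n) ≠ 0 := by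
    simp [div_eq_mul_inv]
    positivity
  set v : ℝ≥0 := (1 : ℝ≥0) / n with hvdef
  have hvr : (v : ℝ) = 1 / n := by push_cast [hvdef]; ring
  have hmeas : Measurable fun x : ℝ => (gaussianPDFReal 0 v x).toNNReal :=
    (measurable_gaussianPDFReal 0 v).real_toNNReal
  have hrw : gaussianReal 0 v
      = volume.withDensity (fun x => ((gaussianPDFReal 0 v x).toNNReal : ℝ≥0∞)) := by
    rw [gaussianReal_of_var_ne_zero 0 hv]
    rfl
  -- pointwise identity
  have hpt : ∀ x : ℝ, ((gaussianPDFReal 0 v x).toNNReal : ℝ) • Real.exp ((n / 8 : ℝ) * x ^ 2)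
      = (Real.sqrt (2 * π * v))⁻¹ * Real.exp (-(3 * n / 8) * x ^ 2) := by
    intro x
    rw [Real.coe_toNNReal _ (gaussianPDFReal_nonneg 0 v x)]
    rw [smul_eq_mul, gaussianPDFReal]
    rw [mul_assoc, ← Real.exp_add]
    congr 1
    rw [hvr]
    field_simp
    ring
  have hint : Integrable (fun x => (Real.sqrt (2 * π * v))⁻¹ * Real.exp (-(3 * n / 8) * x ^ 2))
      volume := (integrable_exp_neg_mul_sq (by positivity)).const_mul _
  constructor
  · rw [hrw, integrable_withDensity_iff_integrable_smul hmeas]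
    exact hint.congr (by filter_upwards with x using (hpt x).symm)
  · rw [hrw, integral_withDensity_eq_integral_smul hmeas]
    simp only [NNReal.smul_def]
    have : ∫ x, ((gaussianPDFReal 0 v x).toNNReal : ℝ) • Real.exp ((n / 8 : ℝ) * x ^ 2)
        = ∫ x, (Real.sqrt (2 * π * v))⁻¹ * Real.exp (-(3 * n / 8) * x ^ 2) := by
      congr 1; funext x; exact hpt x
    rw [this, integral_const_mul, integral_gaussian]
    have hA : (0:ℝ) ≤ 2 * π * v := by positivity
    rw [← Real.sqrt_inv, ← Real.sqrt_mul (by positivity)]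
    have : (2 * π * (v:ℝ))⁻¹ * (π / (3 * n / 8)) = 4 / 3 := by
      rw [hvr]
      field_simp
      ring
    rw [this]
    have h1 : (4 / 3 : ℝ) ≤ Real.exp (1 / 3) := by
      have := Real.add_one_le_exp (1/3 : ℝ)
      linarith
    calc Real.sqrt (4/3) ≤ Real.sqrt (Real.exp (1/3)) := Real.sqrt_le_sqrt h1
      _ = Real.exp (1/6) := by
          rw [show (1/3 : ℝ) = (1/6) + (1/6) by norm_num, Real.exp_add,
            ← sq, Real.sqrt_sq (Real.exp_nonneg _)]


open scoped Classical in
lemma comb_sum {n : ℕ} (g : Fin n × Fin n → ℝ) (hg : ∀ q, 0 ≤ g q)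
    (hsym : ∀ i j, g (i, j) = g (j, i)) (hdiag : ∀ i, g (i, i) = 0)
    (S J : Finset (Fin n)) :
    ∑ i ∈ S, ∑ j ∈ J, g (i, j) ≤
      2 * ∑ p ∈ (Finset.univ.filter
        (fun p : {q : Fin n × Fin n // q.1 < q.2} =>
          (p.1.1 ∈ S ∧ p.1.2 ∈ J) ∨ (p.1.1 ∈ J ∧ p.1.2 ∈ S))), g p.1 := by
  classical
  set cond' : Fin n × Fin n → Prop :=
    fun q => (q.1 ∈ S ∧ q.2 ∈ J) ∨ (q.1 ∈ J ∧ q.2 ∈ S) with hcond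
  set D : Finset (Fin n × Fin n) :=
    Finset.univ.filter (fun q => q.1 ≠ q.2 ∧ cond' q) with hD
  have step1 : ∑ i ∈ S, ∑ j ∈ J, g (i, j) = ∑ q ∈ S ×ˢ J, g q := by
    rw [Finset.sum_product]
  have step2 : ∑ q ∈ S ×ˢ J, g q = ∑ q ∈ (S ×ˢ J).filter (fun q => q.1 ≠ q.2), g q := by
    refine (Finset.sum_filter_of_ne ?_).symm
    rintro ⟨a, b⟩ hq hgq h
    simp only at h
    subst h
    exact hgq (hdiag a)
  have step3 : ∑ q ∈ (S ×ˢ J).filter (fun q => q.1 ≠ q.2), g q ≤ ∑ q ∈ D, g q := by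
    refine Finset.sum_le_sum_of_subset_of_nonneg ?_ (fun q _ _ => hg q)
    intro q hq
    simp only [Finset.mem_filter, Finset.mem_product] at hq
    simp only [hD, Finset.mem_filter, Finset.mem_univ, true_and, hcond]
    exact ⟨hq.2, Or.inl hq.1⟩
  have step4 : ∑ q ∈ D, g q = ∑ q ∈ D.filter (fun q => q.1 < q.2), g q
      + ∑ q ∈ D.filter (fun q => ¬ q.1 < q.2), g q :=
    (Finset.sum_filter_add_sum_filter_not D _ g).symm
  have step5 : ∑ q ∈ D.filter (fun q => ¬ q.1 < q.2), g q
      = ∑ q ∈ D.filter (fun q => q.1 < q.2), g q := by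
    refine Finset.sum_nbij' (fun q => q.swap) (fun q => q.swap) ?_ ?_ ?_ ?_ ?_
    · rintro ⟨a, b⟩ hq
      simp only [hD, hcond, Finset.mem_filter, Finset.mem_univ, true_and, Prod.fst_swap,
        Prod.snd_swap, Prod.swap_prod_mk] at hq ⊢
      obtain ⟨⟨hne, hor⟩, hnlt⟩ := hq
      exact ⟨⟨fun h => hne h.symm, hor.symm.imp And.symm And.symm⟩,
        lt_of_le_of_ne (not_lt.mp hnlt) (fun h => hne h.symm)⟩
    · rintro ⟨a, b⟩ hq
      simp only [hD, hcond, Finset.mem_filter, Finset.mem_univ, true_and, Prod.fst_swap,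
        Prod.snd_swap, Prod.swap_prod_mk] at hq ⊢
      obtain ⟨⟨hne, hor⟩, hlt⟩ := hq
      exact ⟨⟨fun h => hne h.symm, hor.symm.imp And.symm And.symm⟩, not_lt.mpr hlt.le⟩
    · intro q _; exact Prod.swap_swap q
    · intro q _; exact Prod.swap_swap q
    · rintro ⟨a, b⟩ _; exact hsym a b
  have step6 : ∑ q ∈ D.filter (fun q => q.1 < q.2), g q
      = ∑ p ∈ (Finset.univ.filter
        (fun p : {q : Fin n × Fin n // q.1 < q.2} =>
          (p.1.1 ∈ S ∧ p.1.2 ∈ J) ∨ (p.1.1 ∈ J ∧ p.1.2 ∈ S))), g p.1 := by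
    have h1 : (Finset.univ.filter
        (fun p : {q : Fin n × Fin n // q.1 < q.2} =>
          (p.1.1 ∈ S ∧ p.1.2 ∈ J) ∨ (p.1.1 ∈ J ∧ p.1.2 ∈ S)))
        = (Finset.univ.filter cond').subtype (fun q => q.1 < q.2) := by
      ext p
      simp [hcond, Finset.mem_subtype]
    rw [h1, Finset.sum_subtype_eq_sum_filter]
    congr 1
    ext q
    simp only [hD, Finset.mem_filter, Finset.mem_univ, true_and]
    constructor
    · rintro ⟨⟨_, hc⟩, hlt⟩; exact ⟨hc, hlt⟩
    · rintro ⟨hc, hlt⟩; exact ⟨⟨ne_of_lt hlt, hc⟩, hlt⟩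
  have hnn : 0 ≤ ∑ q ∈ D.filter (fun q => q.1 < q.2), g q :=
    Finset.sum_nonneg (fun q _ => hg q)
  calc ∑ i ∈ S, ∑ j ∈ J, g (i, j) ≤ ∑ q ∈ D, g q := by rw [step1, step2]; exact step3
    _ = 2 * ∑ q ∈ D.filter (fun q => q.1 < q.2), g q := by rw [step4, step5]; ring
    _ = _ := by rw [step6]

lemma comb_card {n : ℕ} (S J : Finset (Fin n)) :
    ((Finset.univ.filter
        (fun p : {q : Fin n × Fin n // q.1 < q.2} =>
          (p.1.1 ∈ S ∧ p.1.2 ∈ J) ∨ (p.1.1 ∈ J ∧ p.1.2 ∈ S))).card : ℕ)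
      ≤ S.card * J.card := by
  classical
  have h : S.card * J.card = (S ×ˢ J).card := (Finset.card_product S J).symm
  rw [h]
  refine Finset.card_le_card_of_injOn
    (fun p => if p.1.1 ∈ S ∧ p.1.2 ∈ J then p.1 else p.1.swap) ?_ ?_
  · intro p hp
    simp only [Finset.mem_coe, Finset.mem_filter, Finset.mem_univ, true_and] at hp
    show (if p.1.1 ∈ S ∧ p.1.2 ∈ J then p.1 else p.1.swap) ∈ S ×ˢ J
    split_ifs with h1
    · simp [Finset.mem_product, h1.1, h1.2]
    · rcases hp with h2 | h2
      · exact absurd h2 h1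
      · simp [Finset.mem_product, h2.1, h2.2]
  · intro p hp q hq hpq
    simp only at hpq
    have hplt := p.2
    have hqlt := q.2
    split_ifs at hpq with h1 h2 h2
    · exact Subtype.ext hpq
    · exfalso
      have : p.1.1 = q.1.2 ∧ p.1.2 = q.1.1 := by
        constructor
        · rw [hpq]; simp
        · rw [hpq]; simp
      rw [this.1, this.2] at hplt
      exact absurd hqlt (lt_asymm hplt)
    · exfalso
      have : p.1.2 = q.1.1 ∧ p.1.1 = q.1.2 := by
        constructor
        · rw [← hpq]; simp
        · rw [← hpq]; simp
      rw [← this.1, ← this.2] at hqlt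
      exact absurd hplt (lt_asymm hqlt)
    · exact Subtype.ext (Prod.swap_injective hpq)


lemma geom_tail (r : ℝ) (h0 : 0 ≤ r) (h2 : r ≤ 1/2) (n : ℕ) :
    ∑ m ∈ Finset.Icc 1 n, r ^ m ≤ 2 * r := by
  have hins : Finset.range (n+1) = insert 0 (Finset.Icc 1 n) := by
    ext m; simp [Nat.lt_succ_iff]; omega
  have h1 : r ≠ 1 := by linarith
  have hsum := geom_sum_eq h1 (n+1)
  have hthis : ∑ m ∈ Finset.Icc 1 n, r ^ m = (r^(n+1) - 1)/(r-1) - 1 := by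
    rw [← hsum, hins, Finset.sum_insert (by simp)]
    simp
  rw [hthis]
  have key : (r^(n+1) - 1)/(r-1) ≤ 1 + 2*r := by
    rw [div_le_iff_of_neg (by linarith : r - 1 < 0)]
    nlinarith [pow_nonneg h0 (n+1), mul_nonneg h0 (by linarith : (0:ℝ) ≤ 1 - 2*r)]
  linarith


open scoped Classical in
set_option maxHeartbeats 2000000 in
lemma chernoff_pair {Ω : Type} [MeasureSpace Ω] [IsProbabilityMeasure (volume : Measure Ω)]
    {n : ℕ} (hn : 1 ≤ n) {A : Ω → Matrix (Fin n) (Fin n) ℝ} (hA : IsWignerOffdiag n A)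
    {κ : ℝ} (hκ : 0 < κ) (S J : Finset (Fin n)) (hJ : (J.card : ℝ) ≤ κ * n) :
    volume {ω | ∀ i ∈ S, 8 * κ ≤ ∑ j ∈ J, (A ω i j) ^ 2}
      ≤ ENNReal.ofReal (Real.exp (-(S.card : ℝ) * (κ * n) / 3)) := by
  classical
  obtain ⟨hsymA, hdiagA, hmeasA, hindepA, hlawA⟩ := hA
  set t : ℝ := (n : ℝ) / 8 with ht
  set Y : {q : Fin n × Fin n // q.1 < q.2} → Ω → ℝ :=
    fun p ω => (A ω p.1.1 p.1.2) ^ 2 with hY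
  set F : Finset {q : Fin n × Fin n // q.1 < q.2} :=
    Finset.univ.filter (fun p =>
      (p.1.1 ∈ S ∧ p.1.2 ∈ J) ∨ (p.1.1 ∈ J ∧ p.1.2 ∈ S)) with hF
  have hYmeas : ∀ p, Measurable (Y p) := fun p => (hmeasA _ _).pow_const 2
  have hYindep : iIndepFun Y volume := by
    have := hindepA.comp (fun _ => fun x : ℝ => x ^ 2)
      (fun _ => measurable_id.pow_const 2)
    exact this
  -- per-entry integrability and mgf bound
  have hlaw : ∀ p : {q : Fin n × Fin n // q.1 < q.2},
      Measure.map (fun ω => A ω p.1.1 p.1.2) volume = gaussianReal 0 ((1 : ℝ≥0) / n) :=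
    fun p => hlawA _ _ p.2
  have hint : ∀ p, Integrable (fun ω => Real.exp (t * Y p ω)) volume := by
    intro p
    have h1 : Integrable (fun x => Real.exp (t * x ^ 2)) (gaussianReal 0 ((1 : ℝ≥0) / n)) := by
      have := (gauss_exp_sq n hn).1
      simpa [ht] using this
    rw [← hlaw p] at h1
    have := (integrable_map_measure
      ((by measurability : Measurable (fun x : ℝ => Real.exp (t * x ^ 2))).aestronglyMeasurable)
      (hmeasA p.1.1 p.1.2).aemeasurable).mp h1
    exact this
  have hmgf : ∀ p, mgf (Y p) volume t ≤ Real.exp (1 / 6) := by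
    intro p
    rw [mgf]
    have hgm : Measurable (fun x : ℝ => Real.exp (t * x ^ 2)) := by measurability
    have : ∫ ω, Real.exp (t * Y p ω) ∂volume
        = ∫ x, Real.exp (t * x ^ 2) ∂(Measure.map (fun ω => A ω p.1.1 p.1.2) volume) :=
      (integral_map (hmeasA p.1.1 p.1.2).aemeasurable hgm.aestronglyMeasurable).symm
    rw [this, hlaw p]
    have := (gauss_exp_sq n hn).2
    simpa [ht] using this
  -- event inclusion
  have hsub : {ω | ∀ i ∈ S, 8 * κ ≤ ∑ j ∈ J, (A ω i j) ^ 2}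
      ⊆ {ω | 4 * κ * S.card ≤ (∑ p ∈ F, Y p) ω} := by
    intro ω hω
    simp only [Set.mem_setOf_eq] at hω ⊢
    have h1 : 8 * κ * S.card ≤ ∑ i ∈ S, ∑ j ∈ J, (A ω i j) ^ 2 := by
      calc 8 * κ * S.card = ∑ _i ∈ S, 8 * κ := by
            rw [Finset.sum_const, nsmul_eq_mul]; ring
        _ ≤ _ := Finset.sum_le_sum (fun i hi => hω i hi)
    have h2 := comb_sum (fun q => (A ω q.1 q.2) ^ 2) (fun q => sq_nonneg _)
      (fun i j => by show A ω i j ^ 2 = A ω j i ^ 2; rw [hsymA ω i j])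
      (fun i => by show A ω i i ^ 2 = 0; rw [hdiagA ω i]; ring) S J
    have h3 : (∑ p ∈ F, Y p) ω = ∑ p ∈ F, (A ω p.1.1 p.1.2) ^ 2 := by
      simp [hY, Finset.sum_apply]
    rw [h3]
    have : 8 * κ * S.card ≤ 2 * ∑ p ∈ F, (A ω p.1.1 p.1.2) ^ 2 := le_trans h1 (le_trans h2 (le_of_eq rfl))
    linarith
  refine le_trans (measure_mono hsub) ?_
  -- Chernoff
  have hchern := measure_ge_le_exp_mul_mgf (μ := volume) (X := ∑ p ∈ F, Y p)
    (4 * κ * S.card) (by positivity) (hYindep.integrable_exp_mul_sum hYmeas (fun p _ => hint p))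
  rw [hYindep.mgf_sum hYmeas] at hchern
  have hprod : ∏ p ∈ F, mgf (Y p) volume t ≤ Real.exp (1 / 6) ^ F.card := by
    rw [← Finset.prod_const]
    exact Finset.prod_le_prod (fun p _ => mgf_nonneg) (fun p _ => hmgf p)
  have hFcard : (F.card : ℝ) ≤ (S.card : ℝ) * J.card := by
    exact_mod_cast comb_card S J
  have hexp : Real.exp (-t * (4 * κ * S.card)) * ∏ p ∈ F, mgf (Y p) volume t
      ≤ Real.exp (-(S.card : ℝ) * (κ * n) / 3) := by
    calc Real.exp (-t * (4 * κ * S.card)) * ∏ p ∈ F, mgf (Y p) volume t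
        ≤ Real.exp (-t * (4 * κ * S.card)) * Real.exp (1 / 6) ^ F.card := by
          refine mul_le_mul_of_nonneg_left ?_ (Real.exp_nonneg _)
          exact hprod
      _ = Real.exp (-t * (4 * κ * S.card) + F.card * (1 / 6)) := by
          rw [← Real.exp_nat_mul, ← Real.exp_add]
      _ ≤ Real.exp (-(S.card : ℝ) * (κ * n) / 3) := by
          apply Real.exp_le_exp.mpr
          have hsn : (0 : ℝ) ≤ S.card := Nat.cast_nonneg _
          have h1 : (F.card : ℝ) * (1 / 6) ≤ (S.card : ℝ) * (κ * n) / 6 := by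
            have ha : (F.card : ℝ) * (1 / 6) ≤ ((S.card : ℝ) * J.card) * (1 / 6) :=
              mul_le_mul_of_nonneg_right hFcard (by norm_num)
            have hb : (S.card : ℝ) * J.card ≤ (S.card : ℝ) * (κ * n) :=
              mul_le_mul_of_nonneg_left hJ hsn
            linarith
          have h2 : -t * (4 * κ * S.card) = -(S.card : ℝ) * (κ * n) / 2 := by
            rw [ht]; ring
          linarith
  have hne : volume {ω | 4 * κ * S.card ≤ (∑ p ∈ F, Y p) ω} ≠ ⊤ := measure_ne_top _ _
  rw [← ENNReal.ofReal_toReal hne]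
  exact ENNReal.ofReal_le_ofReal (le_trans hchern hexp)


open scoped Classical in
/-- Growing a subset of vertices. For a GOE Wigner matrix `A` with zero
diagonal and `κ ∈ (0,1/2)`, with `Ĩ := {i : ‖A_{i:}‖²_{I^c} < 8κ}`, there exist constants
`C', c' > 0` such that for all `n ≥ (C'/κ)·log n`:
`P(∀ I ⊆ [n] with |I| ≥ (1−κ)n, |Ĩ^c| ≤ |I^c|/4) ≥ 1 − e^{−c'κn}`. -/
theorem stmt15 :
    ∃ C' c' : ℝ, 0 < C' ∧ 0 < c' ∧
      ∀ (κ : ℝ), 0 < κ → κ < 1 / 2 →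
      ∀ (n : ℕ), (C' / κ) * Real.log n ≤ n →
      ∀ (Ω : Type) [MeasureSpace Ω] [IsProbabilityMeasure (volume : Measure Ω)]
        (A : Ω → Matrix (Fin n) (Fin n) ℝ),
        IsWignerOffdiag n A →
        ENNReal.ofReal (1 - Real.exp (-c' * κ * n)) ≤
          volume {ω | ∀ I : Finset (Fin n), (1 - κ) * n ≤ (I.card : ℝ) →
            ((((Finset.univ.filter fun i => ∑ j ∈ Iᶜ, (A ω i j) ^ 2 < 8 * κ)ᶜ).card : ℝ) ≤
              ((Iᶜ.card : ℝ)) / 4)} := by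
  classical
  refine ⟨100, 1/40, by norm_num, by norm_num, ?_⟩
  intro κ hκ0 hκ2 n hlog Ω _ _ A hA
  set G : Set Ω := {ω | ∀ I : Finset (Fin n), (1 - κ) * n ≤ (I.card : ℝ) →
            ((((Finset.univ.filter fun i => ∑ j ∈ Iᶜ, (A ω i j) ^ 2 < 8 * κ)ᶜ).card : ℝ) ≤
              ((Iᶜ.card : ℝ)) / 4)} with hG
  -- trivial case : κ * n < 1
  by_cases hsmall : κ * n < 1
  · have hGuniv : G = Set.univ := by
      rw [hG]
      ext ω
      simp only [Set.mem_setOf_eq, Set.mem_univ, iff_true]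
      intro I hI
      have hIc : Iᶜ.card = 0 := by
        have h1 : (Iᶜ.card : ℝ) = (n : ℝ) - I.card := by
          rw [Finset.card_compl]
          have := Finset.card_le_univ I
          rw [Nat.cast_sub (by simpa using this)]
          simp
        have h2 : (Iᶜ.card : ℝ) < 1 := by
          rw [h1]
          have : κ * n < 1 := hsmall
          nlinarith
        exact_mod_cast (by exact_mod_cast Nat.lt_one_iff.mp (by exact_mod_cast h2) : Iᶜ.card = 0)
      have hIcempty : Iᶜ = (∅ : Finset (Fin n)) := Finset.card_eq_zero.mp hIc
      rw [hIcempty]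
      have : (Finset.univ.filter fun i : Fin n =>
          ∑ j ∈ (∅ : Finset (Fin n)), (A ω i j) ^ 2 < 8 * κ) = Finset.univ := by
        refine Finset.filter_true_of_mem ?_
        intro i _
        simp
        positivity
      rw [this]
      simp
    rw [hGuniv, measure_univ]
    refine ENNReal.ofReal_le_one.mpr ?_
    have := Real.exp_nonneg (-(1/40) * κ * n)
    linarith
  push_neg at hsmall
  -- main case
  have hn3 : 3 ≤ n := by
    have h2 : (2:ℝ) < n := by nlinarith
    have : 2 < n := by exact_mod_cast h2
    omega
  have hn1 : 1 ≤ n := by omega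
  have hn0 : (0:ℝ) < n := by positivity
  have hlogn : 1 ≤ Real.log n := by
    have h3 : Real.exp 1 ≤ 3 := by
      have := Real.exp_one_lt_d9
      linarith
    have : Real.exp 1 ≤ (n : ℝ) := le_trans h3 (by exact_mod_cast hn3)
    calc (1:ℝ) = Real.log (Real.exp 1) := (Real.log_exp 1).symm
      _ ≤ Real.log n := Real.log_le_log (Real.exp_pos 1) this
  have hκn : 100 * Real.log n ≤ κ * n := by
    rw [div_mul_eq_mul_div, div_le_iff₀ hκ0] at hlog
    linarith
  have hκn100 : 100 ≤ κ * n := by nlinarith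
  -- the union bound structure
  set EV : Finset (Fin n) × Finset (Fin n) → Set Ω :=
    fun P => {ω | ∀ i ∈ P.2, 8 * κ ≤ ∑ j ∈ P.1, (A ω i j) ^ 2} with hEV
  set PP : Finset (Finset (Fin n) × Finset (Fin n)) :=
    Finset.univ.filter (fun P => P.1.Nonempty ∧ (P.1.card : ℝ) ≤ κ * n ∧
      P.2.card = P.1.card / 4 + 1) with hPP
  set Gc : Set Ω := {ω | ¬ ∀ I : Finset (Fin n), (1 - κ) * n ≤ (I.card : ℝ) →
            ((((Finset.univ.filter fun i => ∑ j ∈ Iᶜ, (A ω i j) ^ 2 < 8 * κ)ᶜ).card : ℝ) ≤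
              ((Iᶜ.card : ℝ)) / 4)} with hGc
  have hsubset : Gc ⊆ ⋃ P ∈ PP, EV P := by
    intro ω hω
    rw [hGc, Set.mem_setOf_eq] at hω
    push_neg at hω
    obtain ⟨I, hI, hbad⟩ := hω
    set J : Finset (Fin n) := Iᶜ with hJ
    set m : ℕ := J.card with hm
    set Bad : Finset (Fin n) :=
      Finset.univ.filter (fun i => ¬ (∑ j ∈ J, (A ω i j) ^ 2 < 8 * κ)) with hBad
    have hcompl : (Finset.univ.filter fun i => ∑ j ∈ J, (A ω i j) ^ 2 < 8 * κ)ᶜ = Bad := by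
      rw [hBad, Finset.compl_filter]
    rw [hcompl] at hbad
    have hbadcard : (m : ℝ) / 4 < Bad.card := hbad
    have hmκ : (m : ℝ) ≤ κ * n := by
      have h1 : (m : ℝ) = (n : ℝ) - I.card := by
        rw [hm, hJ, Finset.card_compl]
        rw [Nat.cast_sub (by simpa using Finset.card_le_univ I)]
        simp
      rw [h1]
      linarith
    have hscard : m / 4 + 1 ≤ Bad.card := by
      have h1 : ((m / 4 : ℕ) : ℝ) ≤ (m : ℝ) / 4 := by
        calc ((m / 4 : ℕ) : ℝ) ≤ (m : ℝ) / (4 : ℕ) := Nat.cast_div_le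
          _ = (m : ℝ) / 4 := by norm_num
      have h2 : ((m / 4 : ℕ) : ℝ) < (Bad.card : ℝ) := lt_of_le_of_lt h1 hbadcard
      have h3 : m / 4 < Bad.card := by exact_mod_cast h2
      omega
    obtain ⟨S, hSsub, hScard⟩ := Finset.exists_subset_card_eq hscard
    have hmpos : 0 < m := by
      by_contra h
      push_neg at h
      have hm0 : m = 0 := by omega
      have hJempty : J = ∅ := Finset.card_eq_zero.mp hm0
      have hSone : S.Nonempty := by
        rw [← Finset.card_pos, hScard]; omega
      obtain ⟨i, hi⟩ := hSone
      have : i ∈ Bad := hSsub hi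
      rw [hBad, Finset.mem_filter] at this
      apply this.2
      rw [hJempty]
      simp
      positivity
    refine Set.mem_biUnion (show (J, S) ∈ PP from ?_) (show ω ∈ EV (J, S) from ?_)
    · rw [hPP, Finset.mem_filter]
      exact ⟨Finset.mem_univ _, Finset.card_pos.mp hmpos, hmκ, hScard⟩
    · rw [hEV]
      intro i hi
      have : i ∈ Bad := hSsub hi
      rw [hBad, Finset.mem_filter] at this
      exact not_lt.mp this.2
  -- counting
  set bfun : ℕ → Finset (Finset (Fin n) × Finset (Fin n)) :=
    fun m => Finset.powersetCard m Finset.univ ×ˢ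
      Finset.powersetCard (m / 4 + 1) Finset.univ with hbfun
  have hPPB : PP ⊆ (Finset.Icc 1 n).biUnion bfun := by
    intro P hP
    rw [hPP, Finset.mem_filter] at hP
    obtain ⟨_, hne, hle, hcard⟩ := hP
    refine Finset.mem_biUnion.mpr ⟨P.1.card, ?_, ?_⟩
    · rw [Finset.mem_Icc]
      exact ⟨Finset.card_pos.mpr hne, by simpa using Finset.card_le_univ P.1⟩
    · rw [hbfun, Finset.mem_product]
      constructor
      · rw [Finset.mem_powersetCard]; exact ⟨Finset.subset_univ _, rfl⟩
      · rw [Finset.mem_powersetCard]; exact ⟨Finset.subset_univ _, hcard⟩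
  have hdisj : ((Finset.Icc 1 n : Finset ℕ) : Set ℕ).PairwiseDisjoint bfun := by
    intro a _ b _ hab
    simp only [Function.onFun]
    rw [Finset.disjoint_left]
    intro P hPa hPb
    rw [hbfun, Finset.mem_product, Finset.mem_powersetCard] at hPa hPb
    exact hab (hPa.1.2 ▸ hPb.1.2.symm ▸ rfl)
  -- chain of inequalities
  have hchain : volume Gc ≤ ENNReal.ofReal (Real.exp (-(1/40) * κ * n)) := by
    calc volume Gc ≤ volume (⋃ P ∈ PP, EV P) := measure_mono hsubset
      _ ≤ ∑ P ∈ PP, volume (EV P) := measure_biUnion_finset_le PP EV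
      _ ≤ ∑ P ∈ PP, ENNReal.ofReal (Real.exp (-(P.2.card : ℝ) * (κ * n) / 3)) := by
          refine Finset.sum_le_sum ?_
          intro P hP
          rw [hPP, Finset.mem_filter] at hP
          exact chernoff_pair hn1 hA hκ0 P.2 P.1 hP.2.2.1
      _ ≤ ∑ P ∈ (Finset.Icc 1 n).biUnion bfun,
            ENNReal.ofReal (Real.exp (-(P.2.card : ℝ) * (κ * n) / 3)) :=
          Finset.sum_le_sum_of_subset hPPB
      _ = ∑ m ∈ Finset.Icc 1 n, ∑ P ∈ bfun m,
            ENNReal.ofReal (Real.exp (-(P.2.card : ℝ) * (κ * n) / 3)) :=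
          Finset.sum_biUnion hdisj
      _ ≤ ∑ m ∈ Finset.Icc 1 n, ENNReal.ofReal (Real.exp (-(m : ℝ) * (κ * n) / 20)) := by
          refine Finset.sum_le_sum ?_
          intro m hm
          rw [Finset.mem_Icc] at hm
          obtain ⟨hm1, hmn⟩ := hm
          set s : ℕ := m / 4 + 1 with hs
          -- every term equals the constant
          have hterm : ∀ P ∈ bfun m,
              ENNReal.ofReal (Real.exp (-(P.2.card : ℝ) * (κ * n) / 3))
              = ENNReal.ofReal (Real.exp (-(s : ℝ) * (κ * n) / 3)) := by
            intro P hP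
            simp only [hbfun, Finset.mem_product, Finset.mem_powersetCard] at hP
            rw [hP.2.2, hs]
          rw [Finset.sum_congr rfl hterm, Finset.sum_const]
          have hcardb : (bfun m).card = n.choose m * n.choose s := by
            rw [hbfun, Finset.card_product, Finset.card_powersetCard,
              Finset.card_powersetCard, Finset.card_univ, Fintype.card_fin]
          rw [hcardb, nsmul_eq_mul]
          -- now a real inequality
          have hreal : ((n.choose m * n.choose s : ℕ) : ℝ)
              * Real.exp (-(s : ℝ) * (κ * n) / 3) ≤ Real.exp (-(m : ℝ) * (κ * n) / 20) := by
            have hsm : s ≤ m := by rw [hs]; omega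
            have hp1 : ((n.choose m : ℕ) : ℝ) ≤ (n : ℝ) ^ m := by
              exact_mod_cast Nat.choose_le_pow n m
            have hp2 : ((n.choose s : ℕ) : ℝ) ≤ (n : ℝ) ^ m := by
              calc ((n.choose s : ℕ) : ℝ) ≤ (n : ℝ) ^ s := by
                    exact_mod_cast Nat.choose_le_pow n s
                _ ≤ (n : ℝ) ^ m := by
                    apply pow_le_pow_right₀ (by exact_mod_cast hn1) hsm
            have hpow : (n : ℝ) ^ m = Real.exp (m * Real.log n) := by
              rw [← Real.exp_log hn0, ← Real.exp_nat_mul]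
              rw [Real.exp_log hn0]
            have hchoose : ((n.choose m * n.choose s : ℕ) : ℝ)
                ≤ Real.exp (2 * m * Real.log n) := by
              push_cast
              calc ((n.choose m : ℕ) : ℝ) * ((n.choose s : ℕ) : ℝ)
                  ≤ (n : ℝ) ^ m * (n : ℝ) ^ m := by
                    apply mul_le_mul hp1 hp2 (Nat.cast_nonneg _) (by positivity)
                _ = Real.exp (2 * m * Real.log n) := by
                    rw [hpow, ← Real.exp_add]; ring_nf
            calc ((n.choose m * n.choose s : ℕ) : ℝ) * Real.exp (-(s : ℝ) * (κ * n) / 3)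
                ≤ Real.exp (2 * m * Real.log n) * Real.exp (-(s : ℝ) * (κ * n) / 3) := by
                  apply mul_le_mul_of_nonneg_right hchoose (Real.exp_nonneg _)
              _ = Real.exp (2 * m * Real.log n + -(s : ℝ) * (κ * n) / 3) := by
                  rw [← Real.exp_add]
              _ ≤ Real.exp (-(m : ℝ) * (κ * n) / 20) := by
                  apply Real.exp_le_exp.mpr
                  have hm4 : (m : ℝ) / 4 ≤ (s : ℝ) := by
                    have : m < 4 * s := by rw [hs]; omega
                    have : (m : ℝ) < 4 * s := by exact_mod_cast this
                    linarith
                  have hmr : (1 : ℝ) ≤ m := by exact_mod_cast hm1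
                  have e1 : 2 * (m : ℝ) * Real.log n ≤ (m : ℝ) * (κ * n) / 50 := by
                    have := mul_le_mul_of_nonneg_left hκn (by positivity : (0:ℝ) ≤ (m : ℝ))
                    nlinarith
                  have e2 : (m : ℝ) * (κ * n) / 12 ≤ (s : ℝ) * (κ * n) / 3 := by
                    have := mul_le_mul_of_nonneg_right hm4 (by positivity : (0:ℝ) ≤ κ * n)
                    linarith
                  nlinarith
          calc ((n.choose m * n.choose s : ℕ) : ℝ≥0∞)
              * ENNReal.ofReal (Real.exp (-(s : ℝ) * (κ * n) / 3))
              = ENNReal.ofReal (((n.choose m * n.choose s : ℕ) : ℝ)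
                  * Real.exp (-(s : ℝ) * (κ * n) / 3)) := by
                rw [← ENNReal.ofReal_natCast, ← ENNReal.ofReal_mul (Nat.cast_nonneg _)]
            _ ≤ _ := ENNReal.ofReal_le_ofReal hreal
      _ = ENNReal.ofReal (∑ m ∈ Finset.Icc 1 n, Real.exp (-(m : ℝ) * (κ * n) / 20)) :=
          (ENNReal.ofReal_sum_of_nonneg (fun m _ => Real.exp_nonneg _)).symm
      _ ≤ ENNReal.ofReal (Real.exp (-(1/40) * κ * n)) := by
          apply ENNReal.ofReal_le_ofReal
          set r : ℝ := Real.exp (-(κ * n) / 20) with hr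
          have hterm : ∀ m ∈ Finset.Icc 1 n,
              Real.exp (-(m : ℝ) * (κ * n) / 20) = r ^ m := by
            intro m _
            rw [hr, ← Real.exp_nat_mul]
            congr 1
            ring
          rw [Finset.sum_congr rfl hterm]
          have hrhalf : r ≤ 1/2 := by
            have h1 : r ≤ Real.exp (-(5 : ℝ)) := by
              apply Real.exp_le_exp.mpr
              linarith
            have h2 : Real.exp (-(5:ℝ)) ≤ 1/2 := by
              rw [Real.exp_neg]
              rw [inv_le_comm₀ (Real.exp_pos 5) (by norm_num)]
              have := Real.add_one_le_exp (5:ℝ)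
              linarith
            linarith
          have hgeo := geom_tail r (Real.exp_nonneg _) hrhalf n
          have hfin : 2 * r ≤ Real.exp (-(1/40) * κ * n) := by
            have hsplit : r = Real.exp (-(1/40) * κ * n) * Real.exp (-(1/40) * κ * n) := by
              rw [hr, ← Real.exp_add]
              congr 1
              ring
            have he2 : Real.exp (-(1/40) * κ * n) ≤ 1/2 := by
              have h1 : Real.exp (-(1/40) * κ * n) ≤ Real.exp ((-(5/2 : ℝ))) := by
                apply Real.exp_le_exp.mpr
                linarith
              have h2 : Real.exp ((-(5/2 : ℝ))) ≤ 1/2 := by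
                rw [Real.exp_neg]
                rw [inv_le_comm₀ (Real.exp_pos _) (by norm_num)]
                have := Real.add_one_le_exp ((5:ℝ)/2)
                linarith
              linarith
            rw [hsplit]
            have hpos := Real.exp_nonneg (-(1/40) * κ * n)
            nlinarith
          linarith
  -- conclude
  have hee : Real.exp (-(1/40 : ℝ) * κ * n) = Real.exp (-(1/40) * κ * n) := rfl
  have hcover : (1 : ℝ≥0∞) ≤ volume G + ENNReal.ofReal (Real.exp (-(1/40) * κ * n)) := by
    calc (1 : ℝ≥0∞) = volume (Set.univ : Set Ω) := measure_univ.symm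
      _ ≤ volume (G ∪ Gc) := by
          apply measure_mono
          intro ω _
          rcases Classical.em (ω ∈ G) with h | h
          · exact Or.inl h
          · exact Or.inr h
      _ ≤ volume G + volume Gc := measure_union_le G Gc
      _ ≤ volume G + ENNReal.ofReal (Real.exp (-(1/40) * κ * n)) := by
          exact add_le_add_right hchain _
  rw [ENNReal.ofReal_sub _ (Real.exp_nonneg _), ENNReal.ofReal_one]
  rw [tsub_le_iff_right]
  exact hcover

end
end

section
/- Let M > 0 and let A ∈ [−1,1]^{n×n} be the adjacency matrix of a weighted graph on [n] without self loops (A_{ii}=0). Suppose there are subsets Q, W ⊆ [n] such that ‖A_{i:}‖²_W := Σ_{j∈W} A_{ij}² ≥ M for all i ∈ Q. Then there exist subsets Q' ⊆ Q and W' ⊆ W with Q' ∩ W' = ∅, |Q'| ≥ |Q|/5, and ‖A_{i:}‖²_{W'} ≥ M/2 for all i ∈ Q'. -/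
open MeasureTheory ProbabilityTheory Finset
open scoped NNReal ENNReal

noncomputable section

open scoped symmDiff

/-!
Pick the set `S` uniformly at random and keep the rows `i ∈ S ∩ Q` that retain half of their
mass on `W \ S`. For a fixed row `i`, the four sets `S`, `S ∆ {i}`, `S ∆ {i}ᶜ`, `Sᶜ` are
equally likely, and one of them contains `i` and leaves at least half of the mass of row `i`
outside: of `S` and `Sᶜ` one leaves half of it outside, and toggling `i` changes nothing since
`A i i = 0`. So each row of `Q` is kept with probability at least `1/4`, and some `S` keeps
a quarter of `Q`.
-/

section Counting

variable {α β ι : Type*}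

lemma Finset.card_univ_le_mul_card_of_involutive [Fintype β] [DecidableEq β]
    (g : ι → β → β) (hg : ∀ t, Function.Involutive (g t)) (T : Finset ι) (P : Finset β)
    (hP : ∀ b, ∃ t ∈ T, g t b ∈ P) : Fintype.card β ≤ #T * #P := by
  calc Fintype.card β = #(univ : Finset β) := card_univ.symm
    _ ≤ #(T.biUnion fun t => P.image (g t)) := by
        refine card_le_card fun b _ => ?_
        obtain ⟨t, ht, hb⟩ := hP b
        exact mem_biUnion.2 ⟨t, ht, mem_image.2 ⟨g t b, hb, hg t b⟩⟩
    _ ≤ ∑ t ∈ T, #(P.image (g t)) := card_biUnion_le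
    _ ≤ ∑ _t ∈ T, #P := sum_le_sum fun t _ => card_image_le
    _ = #T * #P := by rw [sum_const, smul_eq_mul]

/-- The first moment method, with `b` uniformly distributed. -/
lemma Finset.exists_card_le_mul_card_filter [Fintype β] [Nonempty β] (Q : Finset α)
    (p : β → α → Prop) [∀ b a, Decidable (p b a)] (k : ℕ)
    (h : ∀ a ∈ Q, Fintype.card β ≤ k * #{b | p b a}) :
    ∃ b, #Q ≤ k * #(Q.filter (p b)) := by
  suffices ∑ _b : β, #Q ≤ ∑ b, k * #(Q.filter (p b)) by
    obtain ⟨b, -, hb⟩ := exists_le_of_sum_le univ_nonempty this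
    exact ⟨b, hb⟩
  calc ∑ _b : β, #Q = ∑ _a ∈ Q, Fintype.card β := by
        rw [sum_const, sum_const, card_univ, smul_eq_mul, smul_eq_mul, mul_comm]
    _ ≤ ∑ a ∈ Q, k * #{b | p b a} := sum_le_sum h
    _ = ∑ b, k * #(Q.filter (p b)) := by
        simp_rw [← mul_sum, card_filter]
        rw [sum_comm]

end Counting

section Splitting

variable {α R 𝕜 : Type*} [DecidableEq α] [AddCommMonoid R]
  [Field 𝕜] [LinearOrder 𝕜] [IsStrictOrderedRing 𝕜]

lemma Finset.sum_sdiff_eq_of_mem_iff {f : α → R} {i : α} (hi : f i = 0) (W : Finset α)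
    {U V : Finset α} (h : ∀ j, j ≠ i → (j ∈ U ↔ j ∈ V)) :
    ∑ j ∈ W \ U, f j = ∑ j ∈ W \ V, f j := by
  rw [sdiff_eq_filter, sdiff_eq_filter, sum_filter, sum_filter]
  refine sum_congr rfl fun j _ => ?_
  by_cases hj : j = i
  · simp [hj, hi]
  · simp [h j hj]

lemma Finset.sum_sdiff_add_sum_sdiff_compl [Fintype α] (f : α → R) (W S : Finset α) :
    ∑ j ∈ W \ S, f j + ∑ j ∈ W \ Sᶜ, f j = ∑ j ∈ W, f j := by
  rw [sdiff_compl, inf_eq_inter, ← sum_union (disjoint_sdiff_inter W S), sdiff_union_inter]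

lemma Finset.exists_mem_symmDiff_and_half_le_sum_sdiff [Fintype α] {f : α → 𝕜} {i : α}
    (hi : f i = 0) (W S : Finset α) :
    ∃ T ∈ ({∅, {i}, {i}ᶜ, univ} : Finset (Finset α)),
      i ∈ S ∆ T ∧ (∑ j ∈ W, f j) / 2 ≤ ∑ j ∈ W \ (S ∆ T), f j := by
  have hsplit := sum_sdiff_add_sum_sdiff_compl f W S
  by_cases hS : (∑ j ∈ W, f j) / 2 ≤ ∑ j ∈ W \ S, f j
  · by_cases hiS : i ∈ S
    · exact ⟨∅, by simp, by rwa [← bot_eq_empty, symmDiff_bot],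
        by rwa [← bot_eq_empty, symmDiff_bot]⟩
    · refine ⟨{i}, by simp, by simp [mem_symmDiff, hiS], hS.trans_eq ?_⟩
      exact sum_sdiff_eq_of_mem_iff hi W fun j hj => by simp [mem_symmDiff, hj]
  · have hSc : (∑ j ∈ W, f j) / 2 ≤ ∑ j ∈ W \ Sᶜ, f j := by linarith
    by_cases hiS : i ∈ S
    · refine ⟨{i}ᶜ, by simp, by simp [mem_symmDiff, hiS], hSc.trans_eq ?_⟩
      exact sum_sdiff_eq_of_mem_iff hi W fun j hj => by simp [mem_symmDiff, hj]
    · rw [← mem_compl] at hiS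
      exact ⟨univ, by simp, by rwa [← top_eq_univ, symmDiff_top, hnot_eq_compl],
        by rwa [← top_eq_univ, symmDiff_top, hnot_eq_compl]⟩

lemma Finset.card_univ_le_four_mul_card_filter_half_le_sum_sdiff [Fintype α] {f : α → 𝕜}
    {i : α} (hi : f i = 0) (W : Finset α) :
    Fintype.card (Finset α) ≤
      4 * #{S : Finset α | i ∈ S ∧ (∑ j ∈ W, f j) / 2 ≤ ∑ j ∈ W \ S, f j} := by
  refine (card_univ_le_mul_card_of_involutive (fun T S => S ∆ T)
    (fun T S => symmDiff_symmDiff_cancel_right T S) {∅, {i}, {i}ᶜ, univ} _ fun S => ?_).trans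
    (Nat.mul_le_mul_right _ card_le_four)
  obtain ⟨T, hT, hiT, hsum⟩ := exists_mem_symmDiff_and_half_le_sum_sdiff hi W S
  exact ⟨T, hT, mem_filter.2 ⟨mem_univ _, hiT, hsum⟩⟩

end Splitting

theorem stmt16_general {n : ℕ} (M : ℝ)
    (A : Matrix (Fin n) (Fin n) ℝ)
    (hdiag : ∀ i, A i i = 0)
    (Q W : Finset (Fin n))
    (hQ : ∀ i ∈ Q, M ≤ ∑ j ∈ W, (A i j) ^ 2) :
    ∃ Q' W' : Finset (Fin n), Q' ⊆ Q ∧ W' ⊆ W ∧ Disjoint Q' W' ∧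
      (Q.card : ℝ) / 5 ≤ (Q'.card : ℝ) ∧
      ∀ i ∈ Q', M / 2 ≤ ∑ j ∈ W', (A i j) ^ 2 := by
  classical
  obtain ⟨S, hS⟩ := exists_card_le_mul_card_filter Q
    (fun S i => i ∈ S ∧ M / 2 ≤ ∑ j ∈ W \ S, A i j ^ 2) 4 fun i hi => by
      refine (card_univ_le_four_mul_card_filter_half_le_sum_sdiff
        (f := fun j => A i j ^ 2) (i := i) (by simp [hdiag]) W).trans (Nat.mul_le_mul_left 4 ?_)
      exact card_le_card <| monotone_filter_right _ fun _ _ =>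
        And.imp_right fun h => by linarith [hQ i hi]
  refine ⟨{i ∈ Q | i ∈ S ∧ M / 2 ≤ ∑ j ∈ W \ S, A i j ^ 2}, W \ S, filter_subset _ _,
    sdiff_subset, ?_, ?_, fun i hi => (mem_filter.1 hi).2.2⟩
  · exact disjoint_left.2 fun i hi hW => (mem_sdiff.1 hW).2 (mem_filter.1 hi).2.1
  · have : (#Q : ℝ) ≤ 4 * #{i ∈ Q | i ∈ S ∧ M / 2 ≤ ∑ j ∈ W \ S, A i j ^ 2} := by
      exact_mod_cast hS
    linarith

/-- Elementary decoupling. Let `M > 0` and `A ∈ [−1,1]^{n×n}` be the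
adjacency matrix of a weighted graph without self loops. If `‖A_{i:}‖²_W ≥ M` for all
`i ∈ Q`, then there are `Q' ⊆ Q`, `W' ⊆ W` with `Q' ∩ W' = ∅`, `|Q'| ≥ |Q|/5` and
`‖A_{i:}‖²_{W'} ≥ M/2` for all `i ∈ Q'`. -/
theorem stmt16 {n : ℕ} (M : ℝ) (hM : 0 < M)
    (A : Matrix (Fin n) (Fin n) ℝ)
    (hbound : ∀ i j, -1 ≤ A i j ∧ A i j ≤ 1)
    (hsymm : ∀ i j, A i j = A j i)
    (hdiag : ∀ i, A i i = 0)
    (Q W : Finset (Fin n))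
    (hQ : ∀ i ∈ Q, M ≤ ∑ j ∈ W, (A i j) ^ 2) :
    ∃ Q' W' : Finset (Fin n), Q' ⊆ Q ∧ W' ⊆ W ∧ Disjoint Q' W' ∧
      (Q.card : ℝ) / 5 ≤ (Q'.card : ℝ) ∧
      ∀ i ∈ Q', M / 2 ≤ ∑ j ∈ W', (A i j) ^ 2 :=
  stmt16_general M A hdiag Q W hQ

end
end
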